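/- Let n ≥ 1, 0 < β < n, 1 < p₁ < n/β, 1/p₂ = 1/p₁ − β/n, 0 < q < ∞, and let α, λ be reals with 0 < 2λ < α < n(1 − 1/p₂) − β. Assume there is C₀ > 0 with ‖I^β g‖_{L^{p₂}} ≤ C₀ ‖g‖_{L^{p₁}} for every g ∈ L^{p₁}(ℝⁿ). Then there is a constant C, depending only on n, β, p₁, q, α, λ and C₀, such that for every j ∈ ℤ and every measurable a : ℝⁿ → ℝ supported in B_j = {x : |x| ≤ 2^j} with ‖a‖_{L^{p₁}} ≤ 2^{−jα}, one has sup_{L∈ℤ} 2^{−Lλ} ( ∑_{k ≤ L} 2^{kαq} ‖(I^β a)·χ_{F_k}‖_{L^{p₂}}^{q} )^{1/q} ≤ C · 2^{−jλ}. -/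

import Mathlib

open MeasureTheory
open scoped ENNReal

/-- The Riesz potential `I^β f (x) = ∫ f(y) ‖x - y‖^(β - n) dy` on `ℝⁿ`. -/
noncomputable def rieszPot (n : ℕ) (β : ℝ) (f : EuclideanSpace ℝ (Fin n) → ℝ)
    (x : EuclideanSpace ℝ (Fin n)) : ℝ :=
  ∫ y, f y * ‖x - y‖ ^ (β - (n : ℝ))

/-- The dyadic annulus `F_k = B_k \ B_{k-1}`, where `B_k` is the closed ball of
radius `2^k` centred at the origin. -/
def annulus (n : ℕ) (k : ℤ) : Set (EuclideanSpace ℝ (Fin n)) :=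
  Metric.closedBall 0 ((2 : ℝ) ^ k) \ Metric.closedBall 0 ((2 : ℝ) ^ (k - 1))

/-!
Estimate `2^{kα} ‖(I^β a) χ_{F_k}‖_{p₂}` annulus by annulus by `K 2^{(k-j)λ}`. On the near
annuli `k ≤ j + 1` the assumed `L^{p₁} → L^{p₂}` bound gives `C₀ 2^{-jα}`, and `λ ≤ α` turns
`2^{(k-j)α}` into `2^{α-λ} 2^{(k-j)λ}`. On the far annuli `k ≥ j + 2` every point is at distance
at least `2^{k-2}` from `B_j ⊇ supp a`, so `|I^β a| ≤ 2^{(k-2)(β-n)} ‖a‖₁` there; Hölder on `B_j`,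
`|F_k| ≤ |B_k|` and `n/p₂ = n/p₁ - β` then give the exponent `(k-j)(α + β - n + n/p₂)`, which is
at most `(k-j)λ` because `α + β - n + n/p₂ < 0`. Finally `∑_{k ≤ L} 2^{(k-j)λq}` is a geometric
series of size `2^{(L-j)λq}`, and the weight `2^{-Lλ}` cancels its dependence on `L`.
-/

lemma ENNReal.ofReal_two_rpow (x : ℝ) : ENNReal.ofReal ((2 : ℝ) ^ x) = 2 ^ x := by
  rw [← ENNReal.ofReal_rpow_of_pos two_pos, ENNReal.ofReal_ofNat]

lemma ENNReal.two_rpow_add (x y : ℝ) : (2 : ℝ≥0∞) ^ (x + y) = 2 ^ x * 2 ^ y :=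
  ENNReal.rpow_add x y two_ne_zero ENNReal.ofNat_ne_top

lemma ENNReal.two_rpow_ne_top {x : ℝ} : (2 : ℝ≥0∞) ^ x ≠ ⊤ :=
  ENNReal.rpow_ne_top_of_ne_zero two_ne_zero ENNReal.ofNat_ne_top

lemma ENNReal.inv_one_sub_two_rpow_neg_ne_top {s : ℝ} (hs : 0 < s) :
    (1 - (2 : ℝ≥0∞) ^ (-s))⁻¹ ≠ ⊤ := by
  rw [Ne, ENNReal.inv_eq_top, tsub_eq_zero_iff_le, not_le]
  exact ENNReal.rpow_lt_one_of_one_lt_of_neg ENNReal.one_lt_two (by linarith)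

lemma ENNReal.tsum_Iic_two_rpow (L : ℤ) (c s : ℝ) :
    ∑' k : {k : ℤ // k ≤ L}, (2 : ℝ≥0∞) ^ ((k - c) * s) =
      2 ^ ((L - c) * s) * (1 - 2 ^ (-s))⁻¹ := by
  let e : ℕ ≃ {k : ℤ // k ≤ L} :=
    { toFun m := ⟨L - m, by omega⟩
      invFun k := (L - k).toNat
      left_inv m := by simp
      right_inv k := Subtype.ext (by have := k.2; simp only [Int.ofNat_toNat]; omega) }
  have hterm (m : ℕ) :
      (2 : ℝ≥0∞) ^ (((e m : ℤ) - c) * s) = 2 ^ ((L - c) * s) * (2 ^ (-s)) ^ m := by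
    rw [← ENNReal.rpow_natCast, ← ENNReal.rpow_mul, ← ENNReal.two_rpow_add]
    simp only [e, Equiv.coe_fn_mk, Int.cast_sub, Int.cast_natCast]
    ring_nf
  rw [← e.tsum_eq, tsum_congr hterm, ENNReal.tsum_mul_left, ENNReal.tsum_geometric]

lemma iSup_two_rpow_mul_tsum_rpow_le {f : ℤ → ℝ≥0∞} {K : ℝ≥0∞} {j : ℤ} {lam q : ℝ} (hq : 0 < q)
    (hf : ∀ k, f k ≤ K * 2 ^ ((k - j : ℝ) * lam)) :
    ⨆ L : ℤ, 2 ^ (-(L : ℝ) * lam) * (∑' k : {k : ℤ // k ≤ L}, f k ^ q) ^ (1 / q) ≤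
      K * (1 - 2 ^ (-(lam * q)))⁻¹ ^ (1 / q) * 2 ^ (-(j : ℝ) * lam) := by
  refine iSup_le fun L => ?_
  have hsum : ∑' k : {k : ℤ // k ≤ L}, f k ^ q ≤
      K ^ q * (2 ^ ((L - j : ℝ) * (lam * q)) * (1 - 2 ^ (-(lam * q)))⁻¹) := by
    calc ∑' k : {k : ℤ // k ≤ L}, f k ^ q
        ≤ ∑' k : {k : ℤ // k ≤ L}, K ^ q * 2 ^ ((k - j : ℝ) * (lam * q)) := by
          refine ENNReal.tsum_le_tsum fun k => ?_
          rw [← mul_assoc, ENNReal.rpow_mul, ← ENNReal.mul_rpow_of_nonneg _ _ hq.le]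
          gcongr
          exact hf k
      _ = _ := by rw [ENNReal.tsum_mul_left, ENNReal.tsum_Iic_two_rpow]
  have hq' : 0 ≤ 1 / q := by positivity
  calc 2 ^ (-(L : ℝ) * lam) * (∑' k : {k : ℤ // k ≤ L}, f k ^ q) ^ (1 / q)
      ≤ 2 ^ (-(L : ℝ) * lam) *
          (K ^ q * (2 ^ ((L - j : ℝ) * (lam * q)) * (1 - 2 ^ (-(lam * q)))⁻¹)) ^ (1 / q) := by
        gcongr
    _ = K * (1 - 2 ^ (-(lam * q)))⁻¹ ^ (1 / q) * (2 ^ (-(L : ℝ) * lam + (L - j : ℝ) * lam)) := by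
        have hexp : (L - j : ℝ) * (lam * q) * (1 / q) = (L - j) * lam := by field_simp
        rw [ENNReal.mul_rpow_of_nonneg _ _ hq', ENNReal.mul_rpow_of_nonneg _ _ hq',
          ← ENNReal.rpow_mul, ← ENNReal.rpow_mul, mul_one_div_cancel hq.ne', ENNReal.rpow_one,
          hexp, ENNReal.two_rpow_add]
        ring
    _ = _ := by congr 2; ring

lemma eLpNorm_indicator_le_of_forall_mem_enorm_le {α F : Type*} [MeasurableSpace α]
    [NormedAddCommGroup F] {μ : Measure α} {s : Set α} (hs : MeasurableSet s) {f : α → F}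
    {C : ℝ≥0∞} (hf : ∀ x ∈ s, ‖f x‖ₑ ≤ C) (p : ℝ≥0∞) :
    eLpNorm (s.indicator f) p μ ≤ C * μ s ^ p.toReal⁻¹ := by
  rw [eLpNorm_indicator_eq_eLpNorm_restrict hs]
  simpa using eLpNorm_le_of_ae_enorm_bound (p := p) ((ae_restrict_iff' hs).2 (ae_of_all _ hf))

lemma eLpNorm_one_le_eLpNorm_mul_rpow_measure_of_support_subset {α F : Type*}
    [MeasurableSpace α] [NormedAddCommGroup F] {μ : Measure α} {f : α → F} {s : Set α}
    {p : ℝ≥0∞} (hp : 1 ≤ p) (hf : AEStronglyMeasurable f μ) (hs : f.support ⊆ s) :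
    eLpNorm f 1 μ ≤ eLpNorm f p μ * μ s ^ (1 - p.toReal⁻¹) := by
  rw [← eLpNorm_restrict_eq_of_support_subset (p := 1) hs]
  calc eLpNorm f 1 (μ.restrict s)
      ≤ eLpNorm f p (μ.restrict s) * μ.restrict s Set.univ ^ (1 - p.toReal⁻¹) := by
        simpa using eLpNorm_le_eLpNorm_mul_rpow_measure_univ hp hf.restrict
    _ ≤ eLpNorm f p μ * μ s ^ (1 - p.toReal⁻¹) := by
        rw [Measure.restrict_apply_univ]
        gcongr
        exact Measure.restrict_le_self

lemma volume_closedBall_two_zpow (n : ℕ) (m : ℤ) :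
    volume (Metric.closedBall (0 : EuclideanSpace ℝ (Fin n)) ((2 : ℝ) ^ m)) =
      2 ^ ((m : ℝ) * n) * volume (Metric.ball (0 : EuclideanSpace ℝ (Fin n)) 1) := by
  rw [Measure.addHaar_closedBall _ _ (by positivity), finrank_euclideanSpace_fin,
    ← Real.rpow_intCast, ← Real.rpow_natCast, ← Real.rpow_mul two_pos.le,
    ENNReal.ofReal_two_rpow]

lemma measurableSet_annulus (n : ℕ) (k : ℤ) : MeasurableSet (annulus n k) :=
  Metric.isClosed_closedBall.measurableSet.diff Metric.isClosed_closedBall.measurableSet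

lemma two_zpow_add_two_rpow_sub_two_le_norm {n : ℕ} {j k : ℤ} (hjk : j + 2 ≤ k)
    {x : EuclideanSpace ℝ (Fin n)} (hx : x ∈ annulus n k) :
    (2 : ℝ) ^ j + 2 ^ ((k : ℝ) - 2) ≤ ‖x‖ := by
  have hx' : (2 : ℝ) ^ (k - 1) < ‖x‖ := by simpa using hx.2
  have hj : (2 : ℝ) ^ j ≤ 2 ^ ((k : ℝ) - 2) := by
    have hjk' : (j : ℝ) + 2 ≤ k := by exact_mod_cast hjk
    rw [← Real.rpow_intCast]
    exact Real.rpow_le_rpow_of_exponent_le one_le_two (by linarith)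
  have hk : (2 : ℝ) ^ (k - 1) = 2 * 2 ^ ((k : ℝ) - 2) := by
    rw [← Real.rpow_intCast, show (((k - 1 : ℤ) : ℝ)) = 1 + ((k : ℝ) - 2) by push_cast; ring,
      Real.rpow_add two_pos, Real.rpow_one]
  linarith

lemma enorm_rieszPot_le_of_support_subset {n : ℕ} {β : ℝ} (hβn : β ≤ n)
    {a : EuclideanSpace ℝ (Fin n) → ℝ} {r d : ℝ} (hd : 0 < d)
    (hsupp : a.support ⊆ Metric.closedBall 0 r) {x : EuclideanSpace ℝ (Fin n)}
    (hx : r + d ≤ ‖x‖) :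
    ‖rieszPot n β a x‖ₑ ≤ ENNReal.ofReal (d ^ (β - n)) * eLpNorm a 1 volume := by
  rw [eLpNorm_one_eq_lintegral_enorm, ← lintegral_const_mul' _ _ ENNReal.ofReal_ne_top]
  refine (enorm_integral_le_lintegral_enorm _).trans (lintegral_mono fun y => ?_)
  by_cases hy : a y = 0
  · simp [hy]
  have hdist : d ≤ ‖x - y‖ := by
    have hyr : ‖y‖ ≤ r := mem_closedBall_zero_iff.1 (hsupp hy)
    linarith [norm_sub_norm_le x y]
  rw [enorm_mul, mul_comm, Real.enorm_eq_ofReal (Real.rpow_nonneg (norm_nonneg _) _)]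
  exact mul_le_mul' (ENNReal.ofReal_le_ofReal (Real.rpow_le_rpow_of_nonpos hd hdist (by linarith)))
    le_rfl

lemma eLpNorm_rieszPot_annulus_le_of_le_add_one {n : ℕ} {β α lam : ℝ} {p₁ p₂ C : ℝ≥0∞}
    (hlam : lam ≤ α) {j k : ℤ} (hkj : k ≤ j + 1) {a : EuclideanSpace ℝ (Fin n) → ℝ}
    (hIa : eLpNorm (rieszPot n β a) p₂ volume ≤ C * eLpNorm a p₁ volume)
    (ha : eLpNorm a p₁ volume ≤ 2 ^ (-(j : ℝ) * α)) :
    2 ^ ((k : ℝ) * α) * eLpNorm ((annulus n k).indicator (rieszPot n β a)) p₂ volume ≤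
      C * 2 ^ (α - lam) * 2 ^ ((k - j : ℝ) * lam) := by
  have hexp : (k : ℝ) * α + -(j : ℝ) * α ≤ α - lam + (k - j) * lam := by
    have hkj' : (k : ℝ) ≤ j + 1 := by exact_mod_cast hkj
    nlinarith
  calc 2 ^ ((k : ℝ) * α) * eLpNorm ((annulus n k).indicator (rieszPot n β a)) p₂ volume
      ≤ 2 ^ ((k : ℝ) * α) * (C * 2 ^ (-(j : ℝ) * α)) := by
        gcongr
        exact (eLpNorm_indicator_le _).trans (hIa.trans (by gcongr))
    _ = C * 2 ^ ((k : ℝ) * α + -(j : ℝ) * α) := by rw [ENNReal.two_rpow_add]; ring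
    _ ≤ C * 2 ^ (α - lam + (k - j) * lam) := by gcongr; norm_num
    _ = C * 2 ^ (α - lam) * 2 ^ ((k - j : ℝ) * lam) := by rw [ENNReal.two_rpow_add]; ring

lemma eLpNorm_rieszPot_annulus_le_of_add_two_le {n : ℕ} {β α lam : ℝ} {p₁ p₂ : ℝ≥0∞}
    (hβn : β ≤ n) (hp₁ : 1 ≤ p₁) (hp : n * p₂.toReal⁻¹ = n * p₁.toReal⁻¹ - β)
    (hδ : α + β - n + n * p₂.toReal⁻¹ ≤ lam) {j k : ℤ} (hjk : j + 2 ≤ k)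
    {a : EuclideanSpace ℝ (Fin n) → ℝ} (hmeas : AEStronglyMeasurable a volume)
    (hsupp : a.support ⊆ Metric.closedBall 0 ((2 : ℝ) ^ j))
    (ha : eLpNorm a p₁ volume ≤ 2 ^ (-(j : ℝ) * α)) :
    2 ^ ((k : ℝ) * α) * eLpNorm ((annulus n k).indicator (rieszPot n β a)) p₂ volume ≤
      volume (Metric.ball (0 : EuclideanSpace ℝ (Fin n)) 1) ^ (1 - p₁.toReal⁻¹) *
        volume (Metric.ball (0 : EuclideanSpace ℝ (Fin n)) 1) ^ p₂.toReal⁻¹ *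
        2 ^ (2 * (n - β)) * 2 ^ ((k - j : ℝ) * lam) := by
  set κ := volume (Metric.ball (0 : EuclideanSpace ℝ (Fin n)) 1)
  set e₁ := 1 - p₁.toReal⁻¹
  set e₂ := p₂.toReal⁻¹
  have he₁ : 0 ≤ e₁ := by
    rw [sub_nonneg, ← ENNReal.toReal_inv]
    exact ENNReal.toReal_le_of_le_ofReal zero_le_one (by simpa using ENNReal.inv_le_one.2 hp₁)
  have he₂ : 0 ≤ e₂ := by positivity
  have hpt : ∀ x ∈ annulus n k,
      ‖rieszPot n β a x‖ₑ ≤ 2 ^ (((k : ℝ) - 2) * (β - n)) * eLpNorm a 1 volume := by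
    intro x hx
    simpa only [← Real.rpow_mul two_pos.le, ENNReal.ofReal_two_rpow] using
      enorm_rieszPot_le_of_support_subset hβn (by positivity) hsupp
        (two_zpow_add_two_rpow_sub_two_le_norm hjk hx)
  have hL1 : eLpNorm a 1 volume ≤ 2 ^ (-(j : ℝ) * α) * (2 ^ ((j : ℝ) * n) * κ) ^ e₁ := by
    rw [← volume_closedBall_two_zpow]
    exact (eLpNorm_one_le_eLpNorm_mul_rpow_measure_of_support_subset hp₁ hmeas hsupp).trans
      (by gcongr)
  have hN : eLpNorm ((annulus n k).indicator (rieszPot n β a)) p₂ volume ≤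
      2 ^ (((k : ℝ) - 2) * (β - n)) * eLpNorm a 1 volume * (2 ^ ((k : ℝ) * n) * κ) ^ e₂ := by
    rw [← volume_closedBall_two_zpow]
    exact (eLpNorm_indicator_le_of_forall_mem_enorm_le (measurableSet_annulus n k) hpt p₂).trans
      (by gcongr; exact Set.sdiff_subset)
  -- the Sobolev relation `n/p₂ = n/p₁ - β` makes the exponent depend on `j` only through `k - j`
  have hexp : (k : ℝ) * α + ((k : ℝ) - 2) * (β - n) + -(j : ℝ) * α + (j : ℝ) * n * e₁ +
      (k : ℝ) * n * e₂ ≤ 2 * (n - β) + (k - j) * lam := by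
    have hsplit : (k : ℝ) * α + ((k : ℝ) - 2) * (β - n) + -(j : ℝ) * α + (j : ℝ) * n * e₁ +
        (k : ℝ) * n * e₂ = (k - j) * (α + β - n + n * e₂) + 2 * (n - β) := by
      simp only [e₁, e₂]; linear_combination (j : ℝ) * hp
    have hjk' : (j : ℝ) + 2 ≤ k := by exact_mod_cast hjk
    rw [hsplit]
    nlinarith
  calc 2 ^ ((k : ℝ) * α) * eLpNorm ((annulus n k).indicator (rieszPot n β a)) p₂ volume
      ≤ 2 ^ ((k : ℝ) * α) * (2 ^ (((k : ℝ) - 2) * (β - n)) *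
          (2 ^ (-(j : ℝ) * α) * (2 ^ ((j : ℝ) * n) * κ) ^ e₁) * (2 ^ ((k : ℝ) * n) * κ) ^ e₂) := by
        gcongr
        exact hN.trans (by gcongr)
    _ = κ ^ e₁ * κ ^ e₂ * 2 ^ ((k : ℝ) * α + ((k : ℝ) - 2) * (β - n) + -(j : ℝ) * α +
          (j : ℝ) * n * e₁ + (k : ℝ) * n * e₂) := by
        rw [ENNReal.mul_rpow_of_nonneg _ _ he₁, ENNReal.mul_rpow_of_nonneg _ _ he₂,
          ← ENNReal.rpow_mul, ← ENNReal.rpow_mul]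
        simp only [ENNReal.two_rpow_add]
        ring
    _ ≤ κ ^ e₁ * κ ^ e₂ * 2 ^ (2 * (n - β) + (k - j) * lam) := by gcongr; norm_num
    _ = κ ^ e₁ * κ ^ e₂ * 2 ^ (2 * (n - β)) * 2 ^ ((k - j : ℝ) * lam) := by
        rw [ENNReal.two_rpow_add]; ring

noncomputable def annulusConstant (n : ℕ) (β p₁ p₂ α lam : ℝ) (C : ℝ≥0∞) : ℝ≥0∞ :=
  C * 2 ^ (α - lam) + volume (Metric.ball (0 : EuclideanSpace ℝ (Fin n)) 1) ^ (1 - p₁⁻¹) *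
    volume (Metric.ball (0 : EuclideanSpace ℝ (Fin n)) 1) ^ p₂⁻¹ * 2 ^ (2 * (n - β))

lemma annulusConstant_ne_top {n : ℕ} {β p₁ p₂ α lam : ℝ} {C : ℝ≥0∞} (hC : C ≠ ⊤)
    (hp₁ : 1 ≤ p₁) (hp₂ : 0 ≤ p₂) : annulusConstant n β p₁ p₂ α lam C ≠ ⊤ := by
  have hκ : volume (Metric.ball (0 : EuclideanSpace ℝ (Fin n)) 1) ≠ ⊤ :=
    measure_ball_lt_top.ne
  have he₁ : 0 ≤ 1 - p₁⁻¹ := sub_nonneg.2 (inv_le_one_of_one_le₀ hp₁)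
  unfold annulusConstant
  exact ENNReal.add_ne_top.2 ⟨ENNReal.mul_ne_top hC ENNReal.two_rpow_ne_top,
    ENNReal.mul_ne_top (ENNReal.mul_ne_top (ENNReal.rpow_ne_top_of_nonneg he₁ hκ)
      (ENNReal.rpow_ne_top_of_nonneg (by positivity) hκ)) ENNReal.two_rpow_ne_top⟩

lemma two_rpow_mul_eLpNorm_rieszPot_annulus_le {n : ℕ} {β p₁ p₂ α lam : ℝ} {C : ℝ≥0∞}
    (hβn : β < n) (hp₁ : 1 ≤ p₁) (hp₂ : 0 < p₂) (hsob : n / p₂ = n / p₁ - β)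
    (hδ : α + β - n + n / p₂ ≤ lam) (hlam : lam ≤ α) {j : ℤ}
    {a : EuclideanSpace ℝ (Fin n) → ℝ}
    (hIa : eLpNorm (rieszPot n β a) (ENNReal.ofReal p₂) volume ≤
      C * eLpNorm a (ENNReal.ofReal p₁) volume)
    (hmeas : AEStronglyMeasurable a volume)
    (hsupp : a.support ⊆ Metric.closedBall 0 ((2 : ℝ) ^ j))
    (ha : eLpNorm a (ENNReal.ofReal p₁) volume ≤ 2 ^ (-(j : ℝ) * α)) (k : ℤ) :
    2 ^ ((k : ℝ) * α) *
        eLpNorm ((annulus n k).indicator (rieszPot n β a)) (ENNReal.ofReal p₂) volume ≤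
      annulusConstant n β p₁ p₂ α lam C * 2 ^ ((k - j : ℝ) * lam) := by
  have hP₁ : (ENNReal.ofReal p₁).toReal = p₁ := ENNReal.toReal_ofReal (by linarith)
  have hP₂ : (ENNReal.ofReal p₂).toReal = p₂ := ENNReal.toReal_ofReal hp₂.le
  rcases le_or_gt k (j + 1) with hk | hk
  · exact (eLpNorm_rieszPot_annulus_le_of_le_add_one hlam hk hIa ha).trans
      (by gcongr; exact le_self_add)
  · refine (eLpNorm_rieszPot_annulus_le_of_add_two_le hβn.le (by simpa using hp₁)
      (by simpa only [hP₁, hP₂, div_eq_mul_inv] using hsob)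
      (by simpa only [hP₂, div_eq_mul_inv] using hδ) (by omega) hmeas hsupp ha).trans ?_
    rw [hP₁, hP₂]
    gcongr
    exact le_add_self

theorem stmt_7_general (n : ℕ) (β p₁ p₂ q α lam : ℝ)
    (hβ0 : 0 < β) (hβn : β < n) (hp₁ : 1 < p₁) (hp₁n : p₁ < n / β)
    (hp₂ : 1 / p₂ = 1 / p₁ - β / n) (hq : 0 < q)
    (hlam : 0 < lam) (h2lam : 2 * lam < α) (hα : α < n * (1 - 1 / p₂) - β)
    (C₀ : ℝ)
    (hbound : ∀ g : EuclideanSpace ℝ (Fin n) → ℝ, MemLp g (ENNReal.ofReal p₁) volume →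
      eLpNorm (rieszPot n β g) (ENNReal.ofReal p₂) volume ≤
        ENNReal.ofReal C₀ * eLpNorm g (ENNReal.ofReal p₁) volume) :
    ∃ C : ℝ, 0 < C ∧
      ∀ (j : ℤ) (a : EuclideanSpace ℝ (Fin n) → ℝ),
        Measurable a →
        Function.support a ⊆ Metric.closedBall 0 ((2 : ℝ) ^ j) →
        eLpNorm a (ENNReal.ofReal p₁) volume ≤ ENNReal.ofReal ((2 : ℝ) ^ (-(j : ℝ) * α)) →
        (⨆ L : ℤ, ENNReal.ofReal ((2 : ℝ) ^ (-(L : ℝ) * lam)) *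
            (∑' k : {k : ℤ // k ≤ L},
                ENNReal.ofReal ((2 : ℝ) ^ ((k.1 : ℝ) * α * q)) *
                  eLpNorm ((annulus n k.1).indicator (rieszPot n β a))
                      (ENNReal.ofReal p₂) volume ^ q) ^ (1 / q)) ≤
          ENNReal.ofReal (C * (2 : ℝ) ^ (-(j : ℝ) * lam)) := by
  have hn : (0 : ℝ) < n := hβ0.trans hβn
  have hp₂0 : 0 < p₂ := by
    rw [← one_div_pos, hp₂, sub_pos, div_lt_div_iff₀ hn (by linarith)]
    linarith [(lt_div_iff₀ hβ0).1 hp₁n]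
  have hsob : n / p₂ = n / p₁ - β := by
    rw [div_eq_mul_one_div, hp₂, div_eq_mul_one_div (n : ℝ) p₁, mul_sub, mul_div_cancel₀ β hn.ne']
  have hδ : α + β - n + n / p₂ ≤ lam := by
    rw [mul_one_sub, mul_one_div] at hα
    linarith
  set K := annulusConstant n β p₁ p₂ α lam (ENNReal.ofReal C₀) *
    (1 - 2 ^ (-(lam * q)))⁻¹ ^ (1 / q)
  have hK : K ≠ ⊤ := ENNReal.mul_ne_top
    (annulusConstant_ne_top ENNReal.ofReal_ne_top hp₁.le hp₂0.le)
    (ENNReal.rpow_ne_top_of_nonneg (by positivity)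
      (ENNReal.inv_one_sub_two_rpow_neg_ne_top (by positivity)))
  refine ⟨K.toReal + 1, by positivity, fun j a hmeas hsupp ha => ?_⟩
  rw [ENNReal.ofReal_two_rpow] at ha
  have hann := two_rpow_mul_eLpNorm_rieszPot_annulus_le hβn hp₁.le hp₂0 hsob
    hδ (show lam ≤ α by linarith)
    (hbound a ⟨hmeas.aestronglyMeasurable, ha.trans_lt ENNReal.two_rpow_ne_top.lt_top⟩)
    hmeas.aestronglyMeasurable hsupp ha
  simp only [ENNReal.ofReal_two_rpow]
  rw [ENNReal.ofReal_mul (by positivity), ENNReal.ofReal_two_rpow]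
  calc _ = ⨆ L : ℤ, 2 ^ (-(L : ℝ) * lam) * (∑' k : {k : ℤ // k ≤ L}, (2 ^ ((k : ℤ) * α) *
          eLpNorm ((annulus n k).indicator (rieszPot n β a)) (ENNReal.ofReal p₂) volume) ^ q) ^
            (1 / q) := by
        simp_rw [ENNReal.mul_rpow_of_nonneg _ _ hq.le, ← ENNReal.rpow_mul]
    _ ≤ K * 2 ^ (-(j : ℝ) * lam) := (iSup_two_rpow_mul_tsum_rpow_le hq hann :)
    _ ≤ ENNReal.ofReal (K.toReal + 1) * 2 ^ (-(j : ℝ) * lam) :=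
        mul_le_mul_left ((ENNReal.le_ofReal_iff_toReal_le hK (by positivity)).2 (by linarith)) _

/-- for a central atom `a` supported in `B_j` with `‖a‖_{L^{p₁}} ≤ 2^{-jα}`,
the Herz–Morrey norm of `I^β a` is bounded by `C 2^{-jλ}`. -/
theorem stmt_7 (n : ℕ) (hn : 1 ≤ n) (β p₁ p₂ q α lam : ℝ)
    (hβ0 : 0 < β) (hβn : β < n) (hp₁ : 1 < p₁) (hp₁n : p₁ < n / β)
    (hp₂ : 1 / p₂ = 1 / p₁ - β / n) (hq : 0 < q)
    (hlam : 0 < lam) (h2lam : 2 * lam < α) (hα : α < n * (1 - 1 / p₂) - β)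
    (C₀ : ℝ) (hC₀ : 0 < C₀)
    (hbound : ∀ g : EuclideanSpace ℝ (Fin n) → ℝ, MemLp g (ENNReal.ofReal p₁) volume →
      eLpNorm (rieszPot n β g) (ENNReal.ofReal p₂) volume ≤
        ENNReal.ofReal C₀ * eLpNorm g (ENNReal.ofReal p₁) volume) :
    ∃ C : ℝ, 0 < C ∧
      ∀ (j : ℤ) (a : EuclideanSpace ℝ (Fin n) → ℝ),
        Measurable a →
        Function.support a ⊆ Metric.closedBall 0 ((2 : ℝ) ^ j) →
        eLpNorm a (ENNReal.ofReal p₁) volume ≤ ENNReal.ofReal ((2 : ℝ) ^ (-(j : ℝ) * α)) →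
        (⨆ L : ℤ, ENNReal.ofReal ((2 : ℝ) ^ (-(L : ℝ) * lam)) *
            (∑' k : {k : ℤ // k ≤ L},
                ENNReal.ofReal ((2 : ℝ) ^ ((k.1 : ℝ) * α * q)) *
                  eLpNorm ((annulus n k.1).indicator (rieszPot n β a))
                      (ENNReal.ofReal p₂) volume ^ q) ^ (1 / q)) ≤
          ENNReal.ofReal (C * (2 : ℝ) ^ (-(j : ℝ) * lam)) :=
  stmt_7_general n β p₁ p₂ q α lam hβ0 hβn hp₁ hp₁n hp₂ hq hlam h2lam hα C₀ hbound
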